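/- arXiv:2306.02347 — 6 statements merged into one kernel-verified Lean document; each statement's English description precedes it below -/
import Mathlib

section
/- For every sequence λ : ℕ → ℝ with ∑ⱼ λⱼ² < ∞, the infinite product ∏ⱼ (1 + λⱼ)e^{−λⱼ} converges: the partial products ∏_{j<N} (1 + λⱼ)e^{−λⱼ} tend to a finite limit as N → ∞. -/
open Filter Real

/-
Once `|λⱼ| ≤ 1`, which holds for all but finitely many `j` because `λⱼ² → 0`, the factor
`(1 + λⱼ) e^{-λⱼ}` differs from `1` by at most `3 λⱼ²`. So the deviations of the factors from `1`
are absolutely summable, and the product converges.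
-/

theorem Real.abs_one_add_mul_exp_neg_sub_one_le {x : ℝ} (hx : |x| ≤ 1) :
    |(1 + x) * exp (-x) - 1| ≤ 3 * x ^ 2 := by
  have hx' : |-x| ≤ 1 := by rwa [abs_neg]
  have hquad : |exp (-x) - 1 - -x| ≤ x ^ 2 := by simpa using abs_exp_sub_one_sub_id_le hx'
  have hlin : |exp (-x) - 1| ≤ 2 * |x| := by simpa using abs_exp_sub_one_le hx'
  calc |(1 + x) * exp (-x) - 1|
      = |(exp (-x) - 1 - -x) + x * (exp (-x) - 1)| := by ring_nf
    _ ≤ x ^ 2 + |x| * (2 * |x|) := by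
        grw [abs_add_le, abs_mul, hquad, hlin]
    _ = 3 * x ^ 2 := by rw [mul_left_comm, abs_mul_abs_self]; ring

theorem Real.multipliable_one_add_mul_exp_neg_of_summable_sq {ι : Type*} {l : ι → ℝ}
    (hl : Summable fun j => l j ^ 2) : Multipliable fun j => (1 + l j) * exp (-l j) := by
  have hsmall : ∀ᶠ j in cofinite, |l j| ≤ 1 := by
    filter_upwards [hl.tendsto_cofinite_zero.eventually_le_const one_pos] with j hj
    exact (sq_le_one_iff_abs_le_one _).1 hj
  have hdev : Summable fun j => (1 + l j) * exp (-l j) - 1 :=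
    (hl.mul_left 3).of_norm_bounded_eventually <| by
      filter_upwards [hsmall] with j hj using abs_one_add_mul_exp_neg_sub_one_le hj
  simpa using Real.multipliable_one_add_of_summable hdev

/-- **Convergence of the Carleman–Fredholm product.**
For every sequence `λ : ℕ → ℝ` with `∑ⱼ λⱼ² < ∞`, the partial products
`∏_{j<N} (1 + λⱼ) e^{−λⱼ}` tend to a finite limit as `N → ∞`. -/
theorem stmt_1 (l : ℕ → ℝ) (hl : Summable fun j => (l j) ^ 2) :
    ∃ L : ℝ,
      Tendsto (fun N => ∏ j ∈ Finset.range N, (1 + l j) * Real.exp (-(l j)))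
        atTop (nhds L) :=
  ⟨_, (Real.multipliable_one_add_mul_exp_neg_of_summable_sq hl).tendsto_prod_tprod_nat⟩
end

section
/- Let λ : ℕ → ℝ be a sequence with λⱼ > −1 for all j and ∑ⱼ λⱼ² < ∞, and let s := sup_j λⱼ (which is finite). Then the infinite product ∏ⱼ e^{λⱼ}(1 + λⱼ)^{−1} converges and satisfies ∏ⱼ e^{λⱼ}(1 + λⱼ)^{−1} ≥ 1 + (∑ⱼ λⱼ²)/(3(1 + s)). -/
/-!
Each factor is `exp (λ - log (1 + λ))`, so the partial products are `exp` of the partial sums of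
`g(λ) = λ - log (1 + λ) ≥ 0`. Since `g(λ) ≤ λ² / (1 + λ)` and `λⱼ → 0`, the series `∑ g(λⱼ)`
converges. For the lower bound write `1 + λ = v³`; then `log (1 + λ) = 3 log v ≤ 3 (v - 1)`, so
`g(λ) ≥ v³ - 3v + 2 = (v - 1)² (v + 2)`, and an elementary polynomial estimate shows this is at
least `λ² / (3 (1 + s))` whenever `λ ≤ s`. Finally `exp t ≥ 1 + t`.
-/

open Filter Topology

lemma sq_pow_three_sub_one_le {v s : ℝ} (hv : 0 < v) (hs : 0 ≤ s) (hvs : v ^ 3 ≤ 1 + s) :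
    (v ^ 3 - 1) ^ 2 ≤ 3 * (1 + s) * ((v - 1) ^ 2 * (v + 2)) := by
  have h : (v ^ 2 + v + 1) ^ 2 ≤ 3 * (1 + s) * (v + 2) := by
    rcases le_total v 1 with h | h
    · have h₀ : 0 ≤ (1 - v) * v := mul_nonneg (sub_nonneg.2 h) hv.le
      nlinarith [mul_nonneg hs hv.le, mul_nonneg h₀ hv.le]
    · have h₁ : 0 ≤ (v - 1) * (v - 1) := mul_self_nonneg _
      nlinarith [mul_le_mul_of_nonneg_right hvs (by linarith : (0 : ℝ) ≤ v + 2),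
        mul_nonneg h₁ hv.le]
  calc (v ^ 3 - 1) ^ 2 = (v - 1) ^ 2 * (v ^ 2 + v + 1) ^ 2 := by ring
    _ ≤ (v - 1) ^ 2 * (3 * (1 + s) * (v + 2)) := by gcongr
    _ = 3 * (1 + s) * ((v - 1) ^ 2 * (v + 2)) := by ring

lemma Real.log_le_mul_rpow_inv_sub_one {y p : ℝ} (hy : 0 < y) (hp : 0 < p) :
    log y ≤ p * (y ^ p⁻¹ - 1) := by
  calc log y = p * log (y ^ p⁻¹) := by rw [log_rpow hy, mul_inv_cancel_left₀ hp.ne']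
    _ ≤ p * (y ^ p⁻¹ - 1) := by gcongr; exact log_le_sub_one_of_pos (rpow_pos_of_pos hy _)

lemma sq_div_le_sub_log_one_add {x s : ℝ} (hx : -1 < x) (hxs : x ≤ s) (hs : 0 ≤ s) :
    x ^ 2 / (3 * (1 + s)) ≤ x - Real.log (1 + x) := by
  have hx₀ : 0 < 1 + x := by linarith
  set v := (1 + x) ^ (3 : ℝ)⁻¹
  have hv : 0 < v := Real.rpow_pos_of_pos hx₀ _
  have hv₃ : v ^ 3 = 1 + x := by
    rw [← Real.rpow_natCast, ← Real.rpow_mul hx₀.le]; norm_num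
  have hlog : Real.log (1 + x) ≤ 3 * (v - 1) := Real.log_le_mul_rpow_inv_sub_one hx₀ three_pos
  have hpoly := sq_pow_three_sub_one_le hv hs (by linarith)
  rw [hv₃, add_sub_cancel_left] at hpoly
  calc x ^ 2 / (3 * (1 + s)) ≤ (v - 1) ^ 2 * (v + 2) := by
        rw [div_le_iff₀ (by positivity)]; linarith
    _ = x - 3 * (v - 1) := by linear_combination hv₃
    _ ≤ x - Real.log (1 + x) := by linarith

lemma sub_log_one_add_le_sq_div {x : ℝ} (hx : -1 < x) :
    x - Real.log (1 + x) ≤ x ^ 2 / (1 + x) := by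
  have hx₀ : 0 < 1 + x := by linarith
  have := Real.one_sub_inv_le_log_of_pos hx₀
  calc x - Real.log (1 + x) ≤ x - (1 - (1 + x)⁻¹) := by linarith
    _ = x ^ 2 / (1 + x) := by field_simp; ring

lemma tendsto_zero_of_summable_sq {l : ℕ → ℝ} (hsum : Summable fun j => l j ^ 2) :
    Tendsto l atTop (𝓝 0) := by
  have h := (Real.continuous_sqrt.tendsto 0).comp hsum.tendsto_atTop_zero
  rw [tendsto_zero_iff_abs_tendsto_zero]
  simpa [Function.comp_def, Real.sqrt_sq_eq_abs] using h

lemma summable_sub_log_one_add {l : ℕ → ℝ} (hsum : Summable fun j => l j ^ 2) :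
    Summable fun j => l j - Real.log (1 + l j) := by
  refine (hsum.mul_left 2).of_norm_bounded_eventually_nat ?_
  filter_upwards [(tendsto_zero_of_summable_sq hsum).eventually (Ioo_mem_nhds
    (by norm_num : (-1 / 2 : ℝ) < 0) (by norm_num : (0 : ℝ) < 1 / 2))] with j ⟨hj₁, hj₂⟩
  have hx : -1 < l j := by linarith
  have hnonneg : 0 ≤ l j - Real.log (1 + l j) := by
    linarith [Real.log_le_sub_one_of_pos (by linarith : 0 < 1 + l j)]
  rw [Real.norm_of_nonneg hnonneg]
  calc l j - Real.log (1 + l j) ≤ l j ^ 2 / (1 + l j) := sub_log_one_add_le_sq_div hx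
    _ ≤ 2 * l j ^ 2 := by rw [div_le_iff₀ (by linarith)]; nlinarith [sq_nonneg (l j)]

lemma prod_exp_div_one_add_eq_exp_sum {ι : Type*} (t : Finset ι) {l : ι → ℝ}
    (hl : ∀ j, -1 < l j) :
    ∏ j ∈ t, Real.exp (l j) / (1 + l j) = Real.exp (∑ j ∈ t, (l j - Real.log (1 + l j))) := by
  rw [Real.exp_sum]
  refine Finset.prod_congr rfl fun j _ => ?_
  rw [Real.exp_sub, Real.exp_log (by linarith [hl j])]

/-- Let `λ : ℕ → ℝ` with `λⱼ > −1` for all `j` and `∑ⱼ λⱼ² < ∞`, and let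
`s := sup_j λⱼ`.  Then the infinite product `∏ⱼ e^{λⱼ} (1 + λⱼ)⁻¹` converges and its limit
is at least `1 + (∑ⱼ λⱼ²)/(3(1 + s))`. -/
theorem stmt_3 (l : ℕ → ℝ) (hl : ∀ j, -1 < l j) (hsum : Summable fun j => (l j) ^ 2) :
    ∃ L : ℝ,
      Tendsto (fun N => ∏ j ∈ Finset.range N, Real.exp (l j) / (1 + l j))
        atTop (nhds L) ∧
      1 + (∑' j, (l j) ^ 2) / (3 * (1 + ⨆ j, l j)) ≤ L := by
  have hl₀ := tendsto_zero_of_summable_sq hsum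
  have hle : ∀ j, l j ≤ ⨆ j, l j := le_ciSup hl₀.bddAbove_range
  have hs : 0 ≤ ⨆ j, l j := le_of_tendsto' hl₀ hle
  have hg := summable_sub_log_one_add hsum
  refine ⟨Real.exp (∑' j, (l j - Real.log (1 + l j))), ?_, ?_⟩
  · simp_rw [prod_exp_div_one_add_eq_exp_sum _ hl]
    exact (Real.continuous_exp.tendsto _).comp hg.hasSum.tendsto_sum_nat
  · calc 1 + (∑' j, l j ^ 2) / (3 * (1 + ⨆ j, l j))
        = 1 + ∑' j, l j ^ 2 / (3 * (1 + ⨆ j, l j)) := by rw [tsum_div_const]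
      _ ≤ 1 + ∑' j, (l j - Real.log (1 + l j)) := by
        gcongr 1 + ?_
        exact (hsum.div_const _).tsum_le_tsum
          (fun j => sq_div_le_sub_log_one_add (hl j) (hle j) hs) hg
      _ ≤ _ := by linarith [Real.add_one_le_exp (∑' j, (l j - Real.log (1 + l j)))]
end

section
/- Let λ : ℕ → ℝ satisfy ∑ᵢ λᵢ² < ∞ and 1 + λᵢ ≥ c for all i, for some c > 0. Define λ̃ᵢ := (1 + λᵢ)^{−1} − 1. Let r : ℕ → ℝ be such that ∑ᵢ |λ̃ᵢ rᵢ| < ∞. Then the series ∑ᵢ [ (λᵢ/(1 + λᵢ))(1 + rᵢ) − log(1 + λᵢ) ], ∑ᵢ λ̃ᵢ rᵢ, and ∑ᵢ [ log(1 + λ̃ᵢ) − λ̃ᵢ ] all converge absolutely, and (1/2) ∑ᵢ [ (λᵢ/(1 + λᵢ))(1 + rᵢ) − log(1 + λᵢ) ] = (1/2) [ −∑ᵢ λ̃ᵢ rᵢ + ∑ᵢ ( log(1 + λ̃ᵢ) − λ̃ᵢ ) ]. -/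
/-! With `aᵢ = λᵢ / (1 + λᵢ)` one has `λ̃ᵢ = -aᵢ` and `log (1 + λ̃ᵢ) = -log (1 + λᵢ)`, so the
identity holds term by term. The only analytic input is the absolute convergence of the
Carleman–Fredholm part: `x / (1 + x) ≤ log (1 + x) ≤ x` squeezes `log (1 + x) - x / (1 + x)`
between `0` and `x² / (1 + x) ≤ x² / c`. -/

open Real

lemma abs_div_one_add_sub_log_le {x : ℝ} (hx : 0 < 1 + x) :
    |x / (1 + x) - log (1 + x)| ≤ x ^ 2 / (1 + x) := by
  have hlower : x / (1 + x) ≤ log (1 + x) := by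
    have h := one_sub_inv_le_log_of_pos hx
    have heq : 1 - (1 + x)⁻¹ = x / (1 + x) := by field_simp; ring
    rwa [heq] at h
  have hupper : log (1 + x) ≤ x := by linarith [log_le_sub_one_of_pos hx]
  have hgap : x - x / (1 + x) = x ^ 2 / (1 + x) := by field_simp; ring
  rw [abs_sub_comm, abs_of_nonneg (sub_nonneg.mpr hlower)]
  linarith

lemma summable_abs_div_one_add_sub_log {ι : Type*} {l : ι → ℝ} {c : ℝ} (hc : 0 < c)
    (hl : ∀ i, c ≤ 1 + l i) (hsum : Summable fun i => l i ^ 2) :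
    Summable fun i => |l i / (1 + l i) - log (1 + l i)| :=
  (hsum.div_const c).of_nonneg_of_le (fun _ => abs_nonneg _) fun i =>
    (abs_div_one_add_sub_log_le (hc.trans_le (hl i))).trans
      (div_le_div_of_nonneg_left (sq_nonneg _) hc (hl i))

lemma inv_one_add_sub_one {x : ℝ} (hx : 1 + x ≠ 0) : (1 + x)⁻¹ - 1 = -(x / (1 + x)) := by
  field_simp
  ring

lemma log_one_add_inv_one_add_sub_one (x : ℝ) : log (1 + ((1 + x)⁻¹ - 1)) = -log (1 + x) := by
  rw [add_sub_cancel, log_inv]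

/-- Let `λ : ℕ → ℝ` satisfy `∑ᵢ λᵢ² < ∞` and `1 + λᵢ ≥ c > 0` for all `i`.  Define
`λ̃ᵢ := (1 + λᵢ)⁻¹ − 1`, and let `r : ℕ → ℝ` with `∑ᵢ |λ̃ᵢ rᵢ| < ∞`.  Then the series
`∑ᵢ [ (λᵢ/(1 + λᵢ))(1 + rᵢ) − log(1 + λᵢ) ]`, `∑ᵢ λ̃ᵢ rᵢ` and
`∑ᵢ [ log(1 + λ̃ᵢ) − λ̃ᵢ ]` converge absolutely and
`(1/2) ∑ᵢ [ (λᵢ/(1 + λᵢ))(1 + rᵢ) − log(1 + λᵢ) ]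
  = (1/2) [ −∑ᵢ λ̃ᵢ rᵢ + ∑ᵢ ( log(1 + λ̃ᵢ) − λ̃ᵢ ) ]`. -/
theorem stmt_4 (l r : ℕ → ℝ) {c : ℝ} (hc : 0 < c) (hl : ∀ i, c ≤ 1 + l i)
    (hsum : Summable fun i => (l i) ^ 2)
    (hr : Summable fun i => |((1 + l i)⁻¹ - 1) * r i|) :
    Summable (fun i => |l i / (1 + l i) * (1 + r i) - Real.log (1 + l i)|) ∧
    Summable (fun i => |((1 + l i)⁻¹ - 1) * r i|) ∧
    Summable (fun i => |Real.log (1 + ((1 + l i)⁻¹ - 1)) - ((1 + l i)⁻¹ - 1)|) ∧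
    (1 / 2) * (∑' i, (l i / (1 + l i) * (1 + r i) - Real.log (1 + l i))) =
      (1 / 2) * (-(∑' i, ((1 + l i)⁻¹ - 1) * r i) +
        ∑' i, (Real.log (1 + ((1 + l i)⁻¹ - 1)) - ((1 + l i)⁻¹ - 1))) := by
  have hne i : 1 + l i ≠ 0 := (hc.trans_le (hl i)).ne'
  have hfredholm i : log (1 + ((1 + l i)⁻¹ - 1)) - ((1 + l i)⁻¹ - 1) =
      l i / (1 + l i) - log (1 + l i) := by
    rw [log_one_add_inv_one_add_sub_one, inv_one_add_sub_one (hne i)]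
    ring
  have hterm i : l i / (1 + l i) * (1 + r i) - log (1 + l i) =
      -(((1 + l i)⁻¹ - 1) * r i) + (log (1 + ((1 + l i)⁻¹ - 1)) - ((1 + l i)⁻¹ - 1)) := by
    rw [hfredholm, inv_one_add_sub_one (hne i)]
    ring
  have hfredholm_abs : Summable fun i => |log (1 + ((1 + l i)⁻¹ - 1)) - ((1 + l i)⁻¹ - 1)| := by
    simpa only [hfredholm] using summable_abs_div_one_add_sub_log hc hl hsum
  have hcross := hr.of_abs
  have hsplit := hcross.neg.add hfredholm_abs.of_abs
  refine ⟨?_, hr, hfredholm_abs, ?_⟩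
  · simpa only [hterm] using hsplit.abs
  · rw [tsum_congr hterm, hcross.neg.tsum_add hfredholm_abs.of_abs, tsum_neg]
end

section
/- Let A and Â be bounded positive (self-adjoint, nonnegative) operators on a real Hilbert space H with Â − A Hilbert–Schmidt, and let ε > 0. Then: (i) ‖(εI + Â)^{−1/2} − (εI + A)^{−1/2}‖ ≤ ‖Â − A‖₂ / ε^{3/2}; and (ii) ‖[ (εI + Â)^{−1/2} − (εI + A)^{−1/2} ] A^{1/2}‖ ≤ ‖Â − A‖₂ / ε, where ‖·‖ denotes the operator norm. -/
/-!
Write `Q`, `Q̂` for the square roots of `εI + A`, `εI + Â`. Then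
`Q̂⁻¹ - Q⁻¹ = Q̂⁻¹ (Q - Q̂) Q⁻¹`, where `‖Q⁻¹‖, ‖Q̂⁻¹‖ ≤ ε^{-1/2}` because `‖Q x‖² ≥ ε ‖x‖²`, and
`‖Q⁻¹ A^{1/2}‖ ≤ 1` because `‖A^{1/2} x‖² ≤ ‖Q x‖²`. The difference `D = Q̂ - Q` solves the
Sylvester equation `Q̂ D + D Q = Â - A`; as `Q, Q̂ ≥ √ε I`, testing this equation against
approximate eigenvectors of the self-adjoint `D` gives `2 √ε ‖D‖ ≤ ‖Â - A‖ ≤ ‖Â - A‖₂`.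
-/

open RealInnerProductSpace

namespace ContinuousLinearMap

variable {E : Type*} [NormedAddCommGroup E] [InnerProductSpace ℝ E]

theorem opNorm_le_sqrt_tsum_norm_apply_sq {ι : Type*} (e : HilbertBasis ι ℝ E) (T : E →L[ℝ] E)
    (hT : Summable fun i => ‖T (e i)‖ ^ 2) :
    ‖T‖ ≤ √(∑' i, ‖T (e i)‖ ^ 2) := by
  refine T.opNorm_le_bound (Real.sqrt_nonneg _) fun x => ?_
  have hx : HasSum (fun i => ‖e.repr x i‖ ^ (2 : ℝ)) (‖x‖ ^ (2 : ℝ)) := by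
    simpa using lp.hasSum_norm (by norm_num) (e.repr x)
  have hTe : HasSum (fun i => ‖T (e i)‖ ^ (2 : ℝ)) (√(∑' i, ‖T (e i)‖ ^ 2) ^ (2 : ℝ)) := by
    simpa [Real.sq_sqrt (tsum_nonneg fun i => sq_nonneg ‖T (e i)‖)] using hT.hasSum
  obtain ⟨C, -, hC, hsum⟩ := Real.inner_le_Lp_mul_Lq_hasSum_of_nonneg .two_two (norm_nonneg x)
    (Real.sqrt_nonneg _) (fun i => norm_nonneg _) (fun i => norm_nonneg _) hx hTe
  have hTx : HasSum (fun i => e.repr x i • T (e i)) (T x) := by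
    simpa using (e.hasSum_repr x).mapL T
  calc ‖T x‖ ≤ C := hTx.norm_le_of_bounded hsum fun i => (norm_smul _ _).le
    _ ≤ _ := by rw [mul_comm]; exact hC

theorem IsPositive.inner_apply_sq_le {T : E →L[ℝ] E} (hT : T.IsPositive) (x y : E) :
    ⟪T x, y⟫ ^ 2 ≤ ⟪T x, x⟫ * ⟪T y, y⟫ := by
  have hquad : ∀ t : ℝ, 0 ≤ ⟪T y, y⟫ * (t * t) + 2 * ⟪T x, y⟫ * t + ⟪T x, x⟫ := fun t => by
    have h := hT.inner_nonneg_left (x + t • y)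
    have hsymm : ⟪T y, x⟫ = ⟪T x, y⟫ := by
      rw [hT.inner_left_eq_inner_right, real_inner_comm]
    simp only [map_add, map_smul, inner_add_left, inner_add_right, real_inner_smul_left,
      real_inner_smul_right, hsymm] at h
    linarith
  have := discrim_le_zero hquad
  rw [discrim] at this
  linarith

theorem IsPositive.norm_apply_sq_le {T : E →L[ℝ] E} (hT : T.IsPositive) (x : E) :
    ‖T x‖ ^ 2 ≤ ‖T‖ * ⟪T x, x⟫ := by
  rcases (norm_nonneg (T x)).eq_or_lt with hTx | hTx
  · rw [← hTx]; simpa using mul_nonneg (norm_nonneg T) (hT.inner_nonneg_left x)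
  have hcs := hT.inner_apply_sq_le x (T x)
  have hTTx : ⟪T (T x), T x⟫ ≤ ‖T‖ * ‖T x‖ ^ 2 := by
    calc ⟪T (T x), T x⟫ ≤ ‖T (T x)‖ * ‖T x‖ := real_inner_le_norm _ _
      _ ≤ ‖T‖ * ‖T x‖ * ‖T x‖ := by gcongr; exact T.le_opNorm _
      _ = ‖T‖ * ‖T x‖ ^ 2 := by ring
  rw [real_inner_self_eq_norm_sq] at hcs
  have := mul_le_mul_of_nonneg_left hTTx (hT.inner_nonneg_left x)
  nlinarith [pow_pos hTx 2]

theorem IsPositive.ringInverse [CompleteSpace E] {T : E →L[ℝ] E} (hT : T.IsPositive) :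
    (Ring.inverse T).IsPositive := by
  by_cases hunit : IsUnit T
  · have h := hT.conj_adjoint (Ring.inverse T)
    have hadj : adjoint (Ring.inverse T) = Ring.inverse T :=
      hT.isSelfAdjoint.ringInverse.adjoint_eq
    rwa [hadj, ← mul_def, ← mul_def, Ring.mul_inverse_cancel T hunit, mul_one] at h
  · simp [Ring.inverse_non_unit T hunit]

theorem norm_ringInverse_le_of_mul_norm_le {T : E →L[ℝ] E} (hT : IsUnit T) {c : ℝ} (hc : 0 < c)
    (h : ∀ x, c * ‖x‖ ≤ ‖T x‖) : ‖Ring.inverse T‖ ≤ c⁻¹ := by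
  refine opNorm_le_bound _ (inv_nonneg.2 hc.le) fun y => ?_
  have hy : T (Ring.inverse T y) = y := by
    simpa using congr($(Ring.mul_inverse_cancel T hT) y)
  rw [inv_mul_eq_div, le_div_iff₀ hc, mul_comm]
  simpa [hy] using h (Ring.inverse T y)

section ShiftedSquareRoot

variable [CompleteSpace E] {ε : ℝ} {B Q : E →L[ℝ] E}

theorem norm_apply_sq_eq_of_mul_self_eq (hQ : IsSelfAdjoint Q) (hQB : Q * Q = ε • 1 + B)
    (x : E) : ‖Q x‖ ^ 2 = ε * ‖x‖ ^ 2 + ⟪B x, x⟫ := by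
  rw [← real_inner_self_eq_norm_sq, ← adjoint_inner_left, hQ.adjoint_eq, ← mul_apply_eq_comp, hQB]
  simp [inner_add_left, real_inner_smul_left]

theorem isUnit_of_mul_self_eq (hB : 0 ≤ B) (hQB : Q * Q = ε • 1 + B) (hε : 0 < ε) :
    IsUnit Q := by
  have hcoercive : ∀ x, ‖x‖ ^ 2 * ε.toNNReal ≤ ‖⟪(Q * Q) x, x⟫‖ := fun x => by
    have hBx := ((nonneg_iff_isPositive B).1 hB).inner_nonneg_left x
    rw [hQB, Real.coe_toNNReal _ hε.le]
    simp only [add_apply, smul_apply, one_apply_eq_self, inner_add_left,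
      real_inner_smul_left, real_inner_self_eq_norm_sq, Real.norm_eq_abs]
    exact (le_abs_self _).trans' (by linarith)
  have hQQ := isUnit_of_forall_le_norm_inner_map (Q * Q) (Real.toNNReal_pos.2 hε) hcoercive
  exact ((Commute.refl Q).isUnit_mul_iff.1 hQQ).1

theorem norm_ringInverse_le_of_mul_self_eq (hB : 0 ≤ B) (hQ : IsSelfAdjoint Q)
    (hQB : Q * Q = ε • 1 + B) (hε : 0 < ε) : ‖Ring.inverse Q‖ ≤ (√ε)⁻¹ := by
  refine norm_ringInverse_le_of_mul_norm_le (isUnit_of_mul_self_eq hB hQB hε)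
    (Real.sqrt_pos.2 hε) fun x => ?_
  have hBx := ((nonneg_iff_isPositive B).1 hB).inner_nonneg_left x
  have hsq := norm_apply_sq_eq_of_mul_self_eq hQ hQB x
  refine (pow_le_pow_iff_left₀ (by positivity) (norm_nonneg _) two_ne_zero).1 ?_
  rw [mul_pow, Real.sq_sqrt hε.le, hsq]
  linarith

theorem sqrt_mul_norm_sq_le_inner_of_mul_self_eq (hB : 0 ≤ B) (hQ : 0 ≤ Q)
    (hQB : Q * Q = ε • 1 + B) (hε : 0 < ε) (x : E) : √ε * ‖x‖ ^ 2 ≤ ⟪Q x, x⟫ := by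
  rw [nonneg_iff_isPositive] at hQ
  have hunit := isUnit_of_mul_self_eq hB hQB hε
  have hRnorm := norm_ringInverse_le_of_mul_self_eq hB hQ.isSelfAdjoint hQB hε
  have hRQ : Ring.inverse Q (Q x) = x := by
    simpa using congr($(Ring.inverse_mul_cancel Q hunit) x)
  -- apply `‖R y‖² ≤ ‖R‖ ⟪R y, y⟫` to `R = Q⁻¹` and `y = Q x`
  have h := hQ.ringInverse.norm_apply_sq_le (Q x)
  rw [hRQ, real_inner_comm] at h
  have hsε := Real.sqrt_pos.2 hε
  calc √ε * ‖x‖ ^ 2 ≤ √ε * (‖Ring.inverse Q‖ * ⟪Q x, x⟫) := by gcongr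
    _ ≤ √ε * ((√ε)⁻¹ * ⟪Q x, x⟫) := by
        gcongr
        exact hQ.inner_nonneg_left x
    _ = ⟪Q x, x⟫ := by field_simp

theorem norm_ringInverse_mul_le_one (hQ : IsSelfAdjoint Q) (hQB : Q * Q = ε • 1 + B)
    (hε : 0 ≤ ε) {S : E →L[ℝ] E} (hS : IsSelfAdjoint S) (hSB : S * S = B) :
    ‖Ring.inverse Q * S‖ ≤ 1 := by
  by_cases hunit : IsUnit Q
  swap
  · simp [Ring.inverse_non_unit Q hunit]
  have hstar : Ring.inverse Q * S = star (S * Ring.inverse Q) := by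
    rw [star_mul, hS.star_eq, hQ.ringInverse.star_eq]
  rw [hstar]
  refine (norm_star (S * Ring.inverse Q)).trans_le ?_
  refine opNorm_le_bound _ zero_le_one fun y => ?_
  have hQR : Q (Ring.inverse Q y) = y := by
    simpa using congr($(Ring.mul_inverse_cancel Q hunit) y)
  set x := Ring.inverse Q y
  have hSx : ‖S x‖ ^ 2 = ⟪B x, x⟫ := by
    rw [← real_inner_self_eq_norm_sq, ← adjoint_inner_left, hS.adjoint_eq, ← mul_apply_eq_comp,
      hSB]
  have hQx := norm_apply_sq_eq_of_mul_self_eq hQ hQB x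
  rw [hQR] at hQx
  rw [mul_apply_eq_comp, one_mul]
  refine (pow_le_pow_iff_left₀ (norm_nonneg _) (norm_nonneg _) two_ne_zero).1 ?_
  nlinarith [sq_nonneg ‖x‖]

end ShiftedSquareRoot

section Sylvester

variable {s : ℝ} {Q₁ Q₂ D : E →L[ℝ] E}

theorem two_mul_abs_inner_le_of_norm_eq_one (hQ₁ : Q₁.IsSymmetric) (hD : D.IsSymmetric)
    {u : E} (hu : ‖u‖ = 1) (h₁ : s ≤ ⟪Q₁ u, u⟫) (h₂ : s ≤ ⟪Q₂ u, u⟫) :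
    2 * s * |⟪D u, u⟫| ≤
      ‖Q₁ * D + D * Q₂‖ + (‖Q₁‖ + ‖Q₂‖) * √(‖D‖ ^ 2 - ⟪D u, u⟫ ^ 2) := by
  set μ := ⟪D u, u⟫
  set w := D u - μ • u
  have hw : ‖w‖ ≤ √(‖D‖ ^ 2 - μ ^ 2) := by
    have hDu : ‖D u‖ ≤ ‖D‖ := by simpa [hu] using D.le_opNorm u
    refine Real.le_sqrt_of_sq_le ?_
    have : ‖w‖ ^ 2 = ‖D u‖ ^ 2 - μ ^ 2 := by
      rw [norm_sub_sq_real, real_inner_smul_right, norm_smul, Real.norm_eq_abs, hu, mul_one,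
        sq_abs]
      ring
    nlinarith [norm_nonneg (D u)]
  have hkey :
      ⟪(Q₁ * D + D * Q₂) u, u⟫ = μ * (⟪Q₁ u, u⟫ + ⟪Q₂ u, u⟫) + ⟪w, Q₁ u⟫ + ⟪Q₂ u, w⟫ := by
    have hDu : D u = μ • u + w := by simp [w]
    rw [add_apply, mul_apply_eq_comp, mul_apply_eq_comp, inner_add_left,
      show ⟪Q₁ (D u), u⟫ = ⟪D u, Q₁ u⟫ from hQ₁ _ _, show ⟪D (Q₂ u), u⟫ = ⟪Q₂ u, D u⟫ from hD _ _,
      hDu]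
    simp only [inner_add_left, inner_add_right, real_inner_smul_left, real_inner_smul_right,
      real_inner_comm u]
    ring
  have hΔ : |⟪(Q₁ * D + D * Q₂) u, u⟫| ≤ ‖Q₁ * D + D * Q₂‖ := by
    calc |⟪(Q₁ * D + D * Q₂) u, u⟫| ≤ ‖(Q₁ * D + D * Q₂) u‖ * ‖u‖ :=
          abs_real_inner_le_norm _ _
      _ ≤ ‖Q₁ * D + D * Q₂‖ * ‖u‖ * ‖u‖ := by gcongr; exact le_opNorm _ _
      _ = ‖Q₁ * D + D * Q₂‖ := by rw [hu, mul_one, mul_one]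
  have hQ₁w : |⟪w, Q₁ u⟫| ≤ ‖Q₁‖ * ‖w‖ := by
    calc |⟪w, Q₁ u⟫| ≤ ‖w‖ * ‖Q₁ u‖ := abs_real_inner_le_norm _ _
      _ ≤ ‖w‖ * (‖Q₁‖ * ‖u‖) := by gcongr; exact le_opNorm _ _
      _ = ‖Q₁‖ * ‖w‖ := by rw [hu]; ring
  have hQ₂w : |⟪Q₂ u, w⟫| ≤ ‖Q₂‖ * ‖w‖ := by
    calc |⟪Q₂ u, w⟫| ≤ ‖Q₂ u‖ * ‖w‖ := abs_real_inner_le_norm _ _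
      _ ≤ ‖Q₂‖ * ‖u‖ * ‖w‖ := by gcongr; exact le_opNorm _ _
      _ = ‖Q₂‖ * ‖w‖ := by rw [hu, mul_one]
  calc 2 * s * |μ| ≤ |μ * (⟪Q₁ u, u⟫ + ⟪Q₂ u, u⟫)| := by
        rw [abs_mul]
        nlinarith [abs_nonneg μ, le_abs_self (⟪Q₁ u, u⟫ + ⟪Q₂ u, u⟫)]
    _ ≤ ‖Q₁ * D + D * Q₂‖ + (‖Q₁‖ + ‖Q₂‖) * ‖w‖ := by
        rw [show μ * (⟪Q₁ u, u⟫ + ⟪Q₂ u, u⟫) = ⟪(Q₁ * D + D * Q₂) u, u⟫ - ⟪w, Q₁ u⟫ - ⟪Q₂ u, w⟫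
          by rw [hkey]; ring]
        have := abs_sub (⟪(Q₁ * D + D * Q₂) u, u⟫ - ⟪w, Q₁ u⟫) ⟪Q₂ u, w⟫
        have := abs_sub ⟪(Q₁ * D + D * Q₂) u, u⟫ ⟪w, Q₁ u⟫
        linarith
    _ ≤ _ := by gcongr

theorem two_mul_mul_norm_le_norm_mul_add_mul (hQ₁ : Q₁.IsSymmetric) (hD : D.IsSymmetric)
    (h₁ : ∀ x, s * ‖x‖ ^ 2 ≤ ⟪Q₁ x, x⟫) (h₂ : ∀ x, s * ‖x‖ ^ 2 ≤ ⟪Q₂ x, x⟫) :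
    2 * s * ‖D‖ ≤ ‖Q₁ * D + D * Q₂‖ := by
  set g : ℝ → ℝ := fun t => 2 * s * t - (‖Q₁‖ + ‖Q₂‖) * √(‖D‖ ^ 2 - t ^ 2)
  have hg : ∀ x, g |D.rayleighQuotient x| ≤ ‖Q₁ * D + D * Q₂‖ := fun x => by
    rcases eq_or_ne x 0 with rfl | hx
    · have : 0 ≤ (‖Q₁‖ + ‖Q₂‖) * √(‖D‖ ^ 2 - 0 ^ 2) := by positivity
      simp only [g, rayleighQuotient_apply_zero, abs_zero, mul_zero]
      linarith [norm_nonneg (Q₁ * D + D * Q₂)]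
    set u := ‖x‖⁻¹ • x
    have hu : ‖u‖ = 1 := norm_smul_inv_norm hx
    have hxu : D.rayleighQuotient x = ⟪D u, u⟫ := by
      rw [← D.rayleigh_smul x (inv_ne_zero (norm_ne_zero_iff.2 hx)), rayleighQuotient, hu,
        reApplyInnerSelf_apply, RCLike.re_to_real, one_pow, div_one]
    have := two_mul_abs_inner_le_of_norm_eq_one hQ₁ hD hu (by simpa [hu] using h₁ u)
      (by simpa [hu] using h₂ u)
    simp only [g, hxu, sq_abs]
    linarith
  -- `‖D‖` is the supremum of `|⟪D u, u⟫|` over unit vectors `u`, and `g ‖D‖ = 2 * s * ‖D‖`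
  have hD_mem : ‖D‖ ∈ closure (Set.range fun x => |D.rayleighQuotient x|) := by
    rw [D.norm_eq_iSup_rayleighQuotient hD]
    exact csSup_mem_closure (Set.range_nonempty _) D.bddAbove_rayleighQuotient
  have hclosed : IsClosed {t | g t ≤ ‖Q₁ * D + D * Q₂‖} :=
    isClosed_le (by fun_prop) (by fun_prop)
  have := hclosed.closure_subset_iff.2 (Set.range_subset_iff.2 hg) hD_mem
  simpa [g] using this

end Sylvester

end ContinuousLinearMap

open ContinuousLinearMap

/-- Let `A`, `Â` be bounded positive operators on a real Hilbert space with `Â − A`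
Hilbert–Schmidt and `ε > 0`.  Here `A^{1/2}` is the (unique) positive square root of `A`,
`(εI + A)^{1/2}`, `(εI + Â)^{1/2}` those of `εI + A`, `εI + Â`, and `(εI + A)^{−1/2}`,
`(εI + Â)^{−1/2}` their (ring) inverses.  Then
(i) `‖(εI + Â)^{−1/2} − (εI + A)^{−1/2}‖ ≤ ‖Â − A‖₂ / ε^{3/2}`, and
(ii) `‖[(εI + Â)^{−1/2} − (εI + A)^{−1/2}] A^{1/2}‖ ≤ ‖Â − A‖₂ / ε`,
where `‖·‖` is the operator norm and `‖·‖₂` the Hilbert–Schmidt norm, computed via a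
Hilbert basis `(eᵢ)`. -/
theorem stmt_9 {E : Type*} [NormedAddCommGroup E] [InnerProductSpace ℝ E] [CompleteSpace E]
    {ι : Type*} (e : HilbertBasis ι ℝ E)
    (A Ahat : E →L[ℝ] E) (hA : 0 ≤ A) (hAhat : 0 ≤ Ahat)
    (hHS : Summable fun i => ‖(Ahat - A) (e i)‖ ^ 2)
    (ε : ℝ) (hε : 0 < ε)
    -- `A^{1/2}`: the unique positive square root of `A`
    (sqrtA : E →L[ℝ] E) (hsqrtA_pos : 0 ≤ sqrtA) (hsqrtA : sqrtA * sqrtA = A)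
    -- `(εI + A)^{1/2}`: the unique positive square root of `εI + A`
    (Q : E →L[ℝ] E) (hQ_pos : 0 ≤ Q) (hQ : Q * Q = ε • (1 : E →L[ℝ] E) + A)
    -- `(εI + Â)^{1/2}`: the unique positive square root of `εI + Â`
    (Qhat : E →L[ℝ] E) (hQhat_pos : 0 ≤ Qhat)
    (hQhat : Qhat * Qhat = ε • (1 : E →L[ℝ] E) + Ahat) :
    ‖Ring.inverse Qhat - Ring.inverse Q‖ ≤
      Real.sqrt (∑' i, ‖(Ahat - A) (e i)‖ ^ 2) / ε ^ ((3 : ℝ) / 2) ∧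
    ‖(Ring.inverse Qhat - Ring.inverse Q) * sqrtA‖ ≤
      Real.sqrt (∑' i, ‖(Ahat - A) (e i)‖ ^ 2) / ε := by
  set N := √(∑' i, ‖(Ahat - A) (e i)‖ ^ 2)
  have hQ_sa := ((nonneg_iff_isPositive Q).1 hQ_pos).isSelfAdjoint
  have hQhat_sa := ((nonneg_iff_isPositive Qhat).1 hQhat_pos).isSelfAdjoint
  have hdiff : ‖Q - Qhat‖ ≤ N / (2 * √ε) := by
    have hsylvester : Qhat * (Qhat - Q) + (Qhat - Q) * Q = Ahat - A := by
      rw [mul_sub, sub_mul, hQhat, hQ]; abel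
    have := two_mul_mul_norm_le_norm_mul_add_mul hQhat_sa.isSymmetric
      (hQhat_sa.sub hQ_sa).isSymmetric
      (sqrt_mul_norm_sq_le_inner_of_mul_self_eq hAhat hQhat_pos hQhat hε)
      (sqrt_mul_norm_sq_le_inner_of_mul_self_eq hA hQ_pos hQ hε)
    rw [hsylvester] at this
    rw [norm_sub_rev, le_div_iff₀ (by positivity), mul_comm]
    exact this.trans ((Ahat - A).opNorm_le_sqrt_tsum_norm_apply_sq e hHS)
  have hinv : Ring.inverse Qhat - Ring.inverse Q =
      Ring.inverse Qhat * (Q - Qhat) * Ring.inverse Q :=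
    Ring.inverse_sub_inverse (iff_of_true (isUnit_of_mul_self_eq hAhat hQhat hε)
      (isUnit_of_mul_self_eq hA hQ hε))
  have hRhat := norm_ringInverse_le_of_mul_self_eq hAhat hQhat_sa hQhat hε
  have hR := norm_ringInverse_le_of_mul_self_eq hA hQ_sa hQ hε
  have hRsqrtA := norm_ringInverse_mul_le_one hQ_sa hQ hε.le
    ((nonneg_iff_isPositive sqrtA).1 hsqrtA_pos).isSelfAdjoint hsqrtA
  have hsqrtε : 0 < √ε := Real.sqrt_pos.2 hε
  rw [hinv, mul_assoc _ (Ring.inverse Q)]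
  constructor
  · calc _ ≤ ‖Ring.inverse Qhat‖ * ‖Q - Qhat‖ * ‖Ring.inverse Q‖ := norm_mul₃_le
      _ ≤ (√ε)⁻¹ * (N / (2 * √ε)) * (√ε)⁻¹ := by gcongr
      _ = N / (2 * √ε ^ 3) := by ring
      _ ≤ N / √ε ^ 3 := by gcongr; linarith [pow_pos hsqrtε 3]
      _ = N / ε ^ ((3 : ℝ) / 2) := by
        rw [Real.sqrt_eq_rpow, ← Real.rpow_natCast, ← Real.rpow_mul hε.le]
        norm_num
  · calc _ ≤ ‖Ring.inverse Qhat‖ * ‖Q - Qhat‖ * ‖Ring.inverse Q * sqrtA‖ := norm_mul₃_le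
      _ ≤ (√ε)⁻¹ * (N / (2 * √ε)) * 1 := by gcongr
      _ = N / (2 * √ε ^ 2) := by ring
      _ ≤ N / √ε ^ 2 := by gcongr; linarith [pow_pos hsqrtε 2]
      _ = N / ε := by rw [Real.sq_sqrt hε.le]
end

section
/- Let ε > 0, M > 0, β > 0 and 0 ≤ λ ≤ M. Then the quantity q(λ) := ε λ^β / ( √(ε+λ) · ( √λ + √(ε+λ) ) ) satisfies: q(λ) ≤ ε^β whenever 0 < β ≤ 1, and q(λ) ≤ ε M^{β−1} whenever β ≥ 1. Consequently, for λ > 0, |1/√(ε+λ) − 1/√λ| · λ^{1/2+β} ≤ ε^β for 0 < β ≤ 1 and ≤ ε M^{β−1} for β ≥ 1. -/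
/-! Rationalising, `1/√λ − 1/√(ε+λ) = ε / (√λ √(ε+λ) (√λ + √(ε+λ)))`, so multiplying by
`λ^{1/2+β}` gives exactly `q(λ)`. Since the denominator of `q(λ)` is at least `ε + λ`, it
suffices to bound `ε λ^β` by `C (ε + λ)`: for `β ≤ 1` with `C = ε^β`, because
`λ^β ≤ (ε+λ)^β = (ε+λ)^{β-1} (ε+λ) ≤ ε^{β-1} (ε+λ)`; for `β ≥ 1` with `C = ε M^{β-1}`,
because `λ^β = λ^{β-1} λ ≤ M^{β-1} λ`. -/

open Real

lemma le_sqrt_mul_sqrt_add_sqrt {y : ℝ} (x : ℝ) (hy : 0 ≤ y) : y ≤ √y * (√x + √y) := by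
  have hxy : 0 ≤ √y * √x := by positivity
  nlinarith [sq_sqrt hy]

lemma div_sqrt_mul_sqrt_add_sqrt_le {a x y C : ℝ} (hy : 0 ≤ y) (hC : 0 ≤ C)
    (h : a ≤ C * y) : a / (√y * (√x + √y)) ≤ C :=
  div_le_of_le_mul₀ (by positivity) hC
    (h.trans (mul_le_mul_of_nonneg_left (le_sqrt_mul_sqrt_add_sqrt x hy) hC))

lemma mul_rpow_le_rpow_mul_add {ε x β : ℝ} (hε : 0 < ε) (hx : 0 ≤ x) (hβ₀ : 0 ≤ β)
    (hβ₁ : β ≤ 1) : ε * x ^ β ≤ ε ^ β * (ε + x) := by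
  have hεx : 0 < ε + x := by linarith
  calc ε * x ^ β ≤ ε * (ε + x) ^ β := by gcongr; linarith
    _ = ε * ((ε + x) ^ (β - 1) * (ε + x)) := by rw [rpow_sub_one hεx.ne']; field_simp
    _ ≤ ε * (ε ^ (β - 1) * (ε + x)) := by
        have := rpow_le_rpow_of_nonpos hε (le_add_of_nonneg_right hx) (by linarith : β - 1 ≤ 0)
        gcongr
    _ = ε ^ β * (ε + x) := by rw [rpow_sub_one hε.ne']; field_simp

lemma rpow_le_rpow_sub_one_mul {x M β : ℝ} (hx : 0 ≤ x) (hxM : x ≤ M) (hβ : 1 ≤ β) :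
    x ^ β ≤ M ^ (β - 1) * x := by
  calc x ^ β = x ^ (β - 1) * x ^ (1 : ℝ) := by
        rw [← rpow_add' hx (by linarith)]; ring_nf
    _ ≤ M ^ (β - 1) * x := by
        rw [rpow_one]; gcongr

lemma abs_one_div_sqrt_add_sub_one_div_sqrt_mul_rpow {ε x : ℝ} (β : ℝ) (hε : 0 ≤ ε)
    (hx : 0 < x) :
    |1 / √(ε + x) - 1 / √x| * x ^ (1 / 2 + β) = ε * x ^ β / (√(ε + x) * (√x + √(ε + x))) := by
  have hs : 0 < √x := sqrt_pos.mpr hx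
  have ht : 0 < √(ε + x) := sqrt_pos.mpr (by linarith)
  have hst : √x ≤ √(ε + x) := sqrt_le_sqrt (by linarith)
  have habs : |1 / √(ε + x) - 1 / √x| = 1 / √x - 1 / √(ε + x) :=
    abs_of_nonpos (by linarith [one_div_le_one_div_of_le hs hst]) |>.trans (by ring)
  have hpow : x ^ (1 / 2 + β) = √x * x ^ β := by rw [rpow_add hx, sqrt_eq_rpow]
  have hsq : √(ε + x) ^ 2 - √x ^ 2 = ε := by
    rw [sq_sqrt (by linarith), sq_sqrt hx.le]; ring
  rw [habs, hpow]
  field_simp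
  linear_combination hsq

theorem stmt_13_general (ε M β lam : ℝ) (hε : 0 < ε) (hβ : 0 < β)
    (hlam0 : 0 ≤ lam) (hlamM : lam ≤ M) :
    ((β ≤ 1 →
        ε * lam ^ β / (Real.sqrt (ε + lam) * (Real.sqrt lam + Real.sqrt (ε + lam)))
          ≤ ε ^ β) ∧
     (1 ≤ β →
        ε * lam ^ β / (Real.sqrt (ε + lam) * (Real.sqrt lam + Real.sqrt (ε + lam)))
          ≤ ε * M ^ (β - 1))) ∧
    (0 < lam →
      (β ≤ 1 →
        |1 / Real.sqrt (ε + lam) - 1 / Real.sqrt lam| * lam ^ (1 / 2 + β) ≤ ε ^ β) ∧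
      (1 ≤ β →
        |1 / Real.sqrt (ε + lam) - 1 / Real.sqrt lam| * lam ^ (1 / 2 + β)
          ≤ ε * M ^ (β - 1))) := by
  have hεlam : 0 ≤ ε + lam := by linarith
  have hq : (β ≤ 1 → ε * lam ^ β / (√(ε + lam) * (√lam + √(ε + lam))) ≤ ε ^ β) ∧
      (1 ≤ β → ε * lam ^ β / (√(ε + lam) * (√lam + √(ε + lam))) ≤ ε * M ^ (β - 1)) := by
    refine ⟨fun hβ₁ => ?_, fun hβ₁ => ?_⟩
    · exact div_sqrt_mul_sqrt_add_sqrt_le hεlam (by positivity)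
        (mul_rpow_le_rpow_mul_add hε hlam0 hβ.le hβ₁)
    · have hM : 0 ≤ M ^ (β - 1) := rpow_nonneg (hlam0.trans hlamM) _
      refine div_sqrt_mul_sqrt_add_sqrt_le hεlam (by positivity) ?_
      calc ε * lam ^ β ≤ ε * (M ^ (β - 1) * lam) := by
            gcongr; exact rpow_le_rpow_sub_one_mul hlam0 hlamM hβ₁
        _ ≤ ε * M ^ (β - 1) * (ε + lam) := by nlinarith [mul_nonneg hε.le hM]
  refine ⟨hq, fun hlam => ?_⟩
  rw [abs_one_div_sqrt_add_sub_one_div_sqrt_mul_rpow β hε.le hlam]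
  exact hq

/-- Let `ε > 0`, `M > 0`, `β > 0` and `0 ≤ λ ≤ M`.  Then
`q(λ) := ε λ^β / ( √(ε+λ) ( √λ + √(ε+λ) ) )` satisfies `q(λ) ≤ ε^β` for `0 < β ≤ 1`
and `q(λ) ≤ ε M^{β−1}` for `β ≥ 1`; consequently, for `λ > 0`,
`|1/√(ε+λ) − 1/√λ| λ^{1/2+β}` obeys the same bounds. -/
theorem stmt_13 (ε M β lam : ℝ) (hε : 0 < ε) (hM : 0 < M) (hβ : 0 < β)
    (hlam0 : 0 ≤ lam) (hlamM : lam ≤ M) :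
    ((β ≤ 1 →
        ε * lam ^ β / (Real.sqrt (ε + lam) * (Real.sqrt lam + Real.sqrt (ε + lam)))
          ≤ ε ^ β) ∧
     (1 ≤ β →
        ε * lam ^ β / (Real.sqrt (ε + lam) * (Real.sqrt lam + Real.sqrt (ε + lam)))
          ≤ ε * M ^ (β - 1))) ∧
    (0 < lam →
      (β ≤ 1 →
        |1 / Real.sqrt (ε + lam) - 1 / Real.sqrt lam| * lam ^ (1 / 2 + β) ≤ ε ^ β) ∧
      (1 ≤ β →
        |1 / Real.sqrt (ε + lam) - 1 / Real.sqrt lam| * lam ^ (1 / 2 + β)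
          ≤ ε * M ^ (β - 1))) :=
  stmt_13_general ε M β lam hε hβ hlam0 hlamM
end

section
/- There exists a universal constant c > 0 with the following property. Let H be a separable real Hilbert space, and let Y₁, …, Yₙ be i.i.d. random elements of H with Bochner mean zero and K := ‖ ‖Y₁‖ ‖_{ψ₁} < ∞. Then for every t with 0 ≤ t ≤ K: P( ‖ (1/n) ∑_{k=1}^n Y_k ‖ ≥ t ) ≤ 2 exp( − c n t² / K² ). -/
open MeasureTheory ProbabilityTheory

/-- `E[exp(|Z|/t)]`, as an extended nonnegative real. -/
noncomputable def expMoment1 {Ω : Type*} [MeasurableSpace Ω] (P : Measure Ω)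
    (Z : Ω → ℝ) (t : ℝ) : ENNReal :=
  ∫⁻ ω, ENNReal.ofReal (Real.exp (|Z ω| / t)) ∂P

/-- The admissible set in the definition of the sub-exponential norm
`‖Z‖_{ψ₁} = inf { t > 0 : E[exp(|Z|/t)] ≤ 2 }`. -/
def psi1Set {Ω : Type*} [MeasurableSpace Ω] (P : Measure Ω) (Z : Ω → ℝ) : Set ℝ :=
  {t : ℝ | 0 < t ∧ expMoment1 P Z t ≤ 2}

/-- The sub-exponential norm `‖Z‖_{ψ₁} := inf { t > 0 : E[exp(|Z|/t)] ≤ 2 }`;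
it is finite precisely when `psi1Set P Z` is nonempty. -/
noncomputable def psi1Norm {Ω : Type*} [MeasurableSpace Ω] (P : Measure Ω) (Z : Ω → ℝ) : ℝ :=
  sInf (psi1Set P Z)

/-!
Write `S = Y₁ + ⋯ + Yₙ` and bound the moment `E cosh (l ‖S‖)`. As `E S = 0`, Jensen's inequality
gives `E cosh (l ‖S‖) ≤ E cosh (l ‖S - S'‖)` for an independent copy `S'`, and `S - S'` is a sum of
`n` i.i.d. symmetric vectors `Dᵢ = Yᵢ - Yᵢ'`. In a Hilbert space the parallelogram law together
with `cosh √(a² + b²) ≤ cosh a cosh b` gives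
`cosh ‖w + d‖ + cosh ‖w - d‖ ≤ 2 cosh ‖w‖ cosh² ‖d‖`, so by symmetry every summand costs at most
a factor `E cosh² (l ‖D‖)`, which the `ψ₁` bound makes `≤ exp (128 (l K)²)` once `8 l K ≤ 1`.
A Chernoff bound, optimised in `l`, then yields the claim with `c = 1 / 512`.
-/

open Real Set
open scoped ENNReal

namespace Real

lemma convexOn_cosh : ConvexOn ℝ univ cosh := by
  refine convexOn_of_hasDerivWithinAt2_nonneg convex_univ continuous_cosh.continuousOn
    (f' := sinh) (f'' := cosh) (fun x _ => (hasDerivAt_cosh x).hasDerivWithinAt)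
    (fun x _ => (hasDerivAt_sinh x).hasDerivWithinAt) (fun x _ => (cosh_pos x).le)

lemma convexOn_sinh : ConvexOn ℝ (Ici 0) sinh := by
  refine convexOn_of_hasDerivWithinAt2_nonneg (convex_Ici 0) continuous_sinh.continuousOn
    (f' := cosh) (f'' := sinh) (fun x _ => (hasDerivAt_sinh x).hasDerivWithinAt)
    (fun x _ => (hasDerivAt_cosh x).hasDerivWithinAt) (fun x hx => ?_)
  rw [interior_Ici] at hx
  exact sinh_nonneg_iff.2 (le_of_lt hx)

lemma sinh_le_mul_cosh {x : ℝ} (hx : 0 ≤ x) : sinh x ≤ x * cosh x := by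
  rcases hx.eq_or_lt with rfl | hx
  · simp
  have h := convexOn_sinh.slope_le_of_hasDerivAt self_mem_Ici hx.le hx (hasDerivAt_sinh x)
  rwa [slope_def_field, sinh_zero, sub_zero, sub_zero, div_le_iff₀ hx, mul_comm] at h

lemma mul_sinh_le_mul_sinh {x y : ℝ} (hx : 0 < x) (hxy : x ≤ y) :
    y * sinh x ≤ x * sinh y := by
  have h := convexOn_sinh.secant_mono self_mem_Ici hx.le (hx.le.trans hxy) hx.ne'
    (hx.trans_le hxy).ne' hxy
  simp only [sinh_zero, sub_zero] at h
  rw [div_le_div_iff₀ hx (hx.trans_le hxy)] at h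
  linarith

lemma mul_sinh_mul_cosh_le {b r : ℝ} (hb : 0 < b) (hbr : b ≤ r) :
    b * sinh r * cosh b ≤ r * cosh r * sinh b := by
  rcases hbr.eq_or_lt with rfl | hbr
  · linarith
  -- Expanding `sinh (r ± b)`, the claim is `(r + b) sinh (r - b) ≤ (r - b) sinh (r + b)`.
  have h := mul_sinh_le_mul_sinh (x := r - b) (y := r + b) (by linarith) (by linarith)
  rw [sinh_add, sinh_sub] at h
  linarith

lemma antitoneOn_cosh_sqrt_sq_add_sq_div_cosh (a : ℝ) :
    AntitoneOn (fun b => cosh √(a ^ 2 + b ^ 2) / cosh b) (Ici 0) := by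
  have hderiv : ∀ b, 0 < b → HasDerivAt (fun b => cosh √(a ^ 2 + b ^ 2) / cosh b)
      ((sinh √(a ^ 2 + b ^ 2) * (b / √(a ^ 2 + b ^ 2)) * cosh b
        - cosh √(a ^ 2 + b ^ 2) * sinh b) / cosh b ^ 2) b := by
    intro b hb
    have hr : a ^ 2 + b ^ 2 ≠ 0 := by positivity
    have hsq : HasDerivAt (fun b => √(a ^ 2 + b ^ 2)) (b / √(a ^ 2 + b ^ 2)) b := by
      convert ((hasDerivAt_pow 2 b).const_add (a ^ 2)).sqrt hr using 1
      field_simp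
      ring
    exact ((hasDerivAt_cosh _).comp b hsq).div (hasDerivAt_cosh b) (cosh_pos b).ne'
  refine antitoneOn_of_deriv_nonpos (convex_Ici 0) ?_ ?_ ?_
  · exact (Continuous.div (by fun_prop) continuous_cosh fun b => (cosh_pos b).ne').continuousOn
  · rw [interior_Ici]
    exact fun b hb => (hderiv b hb).differentiableAt.differentiableWithinAt
  · rw [interior_Ici]
    intro b hb
    rw [(hderiv b hb).deriv]
    have hbr : b ≤ √(a ^ 2 + b ^ 2) := le_sqrt_of_sq_le (by nlinarith)
    have hr : 0 < √(a ^ 2 + b ^ 2) := hb.trans_le hbr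
    have hsinh := mul_sinh_mul_cosh_le hb hbr
    apply div_nonpos_of_nonpos_of_nonneg _ (by positivity)
    rw [sub_nonpos, mul_div_assoc', div_mul_eq_mul_div, div_le_iff₀ hr]
    linarith

lemma cosh_sqrt_sq_add_sq_le (a b : ℝ) : cosh √(a ^ 2 + b ^ 2) ≤ cosh a * cosh b := by
  have h := antitoneOn_cosh_sqrt_sq_add_sq_div_cosh a self_mem_Ici (abs_nonneg b) (abs_nonneg b)
  simp only [sq_abs, cosh_abs, sqrt_sq_eq_abs, cosh_zero, div_one, ne_eq, OfNat.ofNat_ne_zero,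
    not_false_eq_true, zero_pow, add_zero] at h
  rwa [div_le_iff₀ (cosh_pos b)] at h

lemma cosh_sq_le_one_add_sq_mul_exp {x : ℝ} (hx : 0 ≤ x) :
    cosh x ^ 2 ≤ 1 + x ^ 2 * exp (2 * x) := by
  have hsinh : 0 ≤ sinh x := sinh_nonneg_iff.2 hx
  calc cosh x ^ 2 = 1 + sinh x ^ 2 := cosh_sq' x
    _ ≤ 1 + x ^ 2 * (cosh x + sinh x) ^ 2 := by
        rw [← mul_pow]
        gcongr
        nlinarith [sinh_le_mul_cosh hx]
    _ = 1 + x ^ 2 * exp (2 * x) := by rw [cosh_add_sinh, ← exp_nat_mul]; norm_num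

lemma sq_le_two_mul_exp {x : ℝ} (hx : 0 ≤ x) : x ^ 2 ≤ 2 * exp x := by
  nlinarith [quadratic_le_exp_of_nonneg hx]

lemma cosh_mul_sq_le_one_add_mul_exp {l K q : ℝ} (hK : 0 < K) (hl : 0 ≤ l) (hlK : 8 * l * K ≤ 1)
    (hq : 0 ≤ q) : cosh (l * q) ^ 2 ≤ 1 + 32 * (l * K) ^ 2 * exp (q / (2 * K)) := by
  have h1 := cosh_sq_le_one_add_sq_mul_exp (mul_nonneg hl hq)
  have h2 : exp (2 * (l * q)) ≤ exp (q / (4 * K)) := by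
    gcongr
    rw [le_div_iff₀ (by positivity)]
    nlinarith
  have h3 : q ^ 2 ≤ 32 * K ^ 2 * exp (q / (4 * K)) := by
    have := sq_le_two_mul_exp (x := q / (4 * K)) (by positivity)
    rw [div_pow, div_le_iff₀ (by positivity)] at this
    linarith
  have h4 : exp (q / (2 * K)) = exp (q / (4 * K)) ^ 2 := by
    rw [← exp_nat_mul]; congr 1; field_simp; ring
  calc cosh (l * q) ^ 2 ≤ 1 + l ^ 2 * q ^ 2 * exp (q / (4 * K)) := by
        rw [← mul_pow]
        exact h1.trans (by gcongr)
    _ ≤ 1 + l ^ 2 * (32 * K ^ 2 * exp (q / (4 * K))) * exp (q / (4 * K)) := by gcongr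
    _ = 1 + 32 * (l * K) ^ 2 * exp (q / (2 * K)) := by rw [h4]; ring

end Real

section InnerProductSpace

variable {E : Type*} [NormedAddCommGroup E] [InnerProductSpace ℝ E]

lemma cosh_norm_add_add_cosh_norm_sub_le (w d : E) :
    cosh ‖w + d‖ + cosh ‖w - d‖ ≤ 2 * cosh ‖w‖ * cosh ‖d‖ ^ 2 := by
  set p := ‖w + d‖
  set q := ‖w - d‖
  have hpq : p ^ 2 + q ^ 2 = 2 * (‖w‖ ^ 2 + ‖d‖ ^ 2) := by
    simpa only [sq] using parallelogram_law_with_norm ℝ w d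
  have hdiff : |p - q| ≤ 2 * ‖d‖ := by
    calc |p - q| ≤ ‖(w + d) - (w - d)‖ := abs_norm_sub_norm_le _ _
      _ ≤ ‖d‖ + ‖d‖ := by rw [add_sub_sub_cancel]; exact norm_add_le d d
      _ = 2 * ‖d‖ := by ring
  have hsum : |(p + q) / 2| ≤ √(‖w‖ ^ 2 + ‖d‖ ^ 2) :=
    abs_le_sqrt (by nlinarith [sq_nonneg (p - q)])
  calc cosh p + cosh q
        = cosh ((p + q) / 2 + (p - q) / 2) + cosh ((p + q) / 2 - (p - q) / 2) := by ring_nf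
    _ = 2 * cosh ((p + q) / 2) * cosh ((p - q) / 2) := by rw [cosh_add, cosh_sub]; ring
    _ ≤ 2 * (cosh ‖w‖ * cosh ‖d‖) * cosh ‖d‖ := by
        gcongr
        · exact (cosh_le_cosh.2 (hsum.trans_eq (abs_of_nonneg (sqrt_nonneg _)).symm)).trans
            (cosh_sqrt_sq_add_sq_le _ _)
        · rw [cosh_le_cosh, abs_div, abs_two, abs_norm]
          linarith
    _ = 2 * cosh ‖w‖ * cosh ‖d‖ ^ 2 := by ring

end InnerProductSpace

lemma ConvexOn.ofReal_map_integral_le_lintegral {Ω F : Type*} [MeasurableSpace Ω]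
    {P : Measure Ω} [IsProbabilityMeasure P] [NormedAddCommGroup F] [NormedSpace ℝ F]
    [CompleteSpace F] {g : F → ℝ} (hg : ConvexOn ℝ univ g) (hgc : Continuous g)
    (hg0 : ∀ x, 0 ≤ g x) {X : Ω → F} (hX : Integrable X P) :
    ENNReal.ofReal (g (∫ ω, X ω ∂P)) ≤ ∫⁻ ω, ENNReal.ofReal (g (X ω)) ∂P := by
  have hg0' : 0 ≤ᵐ[P] fun ω => g (X ω) := Filter.Eventually.of_forall fun ω => hg0 _
  rcases eq_top_or_lt_top (∫⁻ ω, ENNReal.ofReal (g (X ω)) ∂P) with htop | hfin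
  · exact htop ▸ le_top
  · have hgX : Integrable (fun ω => g (X ω)) P :=
      ⟨hgc.comp_aestronglyMeasurable hX.1, (hasFiniteIntegral_iff_ofReal hg0').2 hfin⟩
    rw [← ofReal_integral_eq_lintegral_ofReal hgX hg0']
    exact ENNReal.ofReal_le_ofReal <| hg.map_integral_le hgc.continuousOn isClosed_univ
      (Filter.Eventually.of_forall fun _ => mem_univ _) hX hgX

lemma convexOn_cosh_mul_norm {E : Type*} [SeminormedAddCommGroup E] [NormedSpace ℝ E]
    {l : ℝ} (hl : 0 ≤ l) : ConvexOn ℝ univ fun x : E => cosh (l * ‖x‖) := by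
  refine ⟨convex_univ, fun x _ y _ a b ha hb hab => ?_⟩
  have hnorm : l * ‖a • x + b • y‖ ≤ a * (l * ‖x‖) + b * (l * ‖y‖) := by
    have := (convexOn_univ_norm (E := E)).2 (mem_univ x) (mem_univ y) ha hb hab
    simp only [smul_eq_mul] at this
    nlinarith
  calc cosh (l * ‖a • x + b • y‖) ≤ cosh (a * (l * ‖x‖) + b * (l * ‖y‖)) := by
        rw [cosh_le_cosh, abs_of_nonneg (by positivity), abs_of_nonneg (by positivity)]
        exact hnorm
    _ ≤ a • cosh (l * ‖x‖) + b • cosh (l * ‖y‖) :=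
        convexOn_cosh.2 (mem_univ _) (mem_univ _) ha hb hab

lemma ofReal_cosh_norm_le_lintegral_cosh_norm_sub {Ω E : Type*} [MeasurableSpace Ω]
    {P : Measure Ω} [IsProbabilityMeasure P] [NormedAddCommGroup E] [NormedSpace ℝ E]
    [CompleteSpace E] {X : Ω → E}
    (hX : Integrable X P) (hX0 : ∫ ω, X ω ∂P = 0) {l : ℝ} (hl : 0 ≤ l) (v : E) :
    ENNReal.ofReal (cosh (l * ‖v‖)) ≤ ∫⁻ ω, ENNReal.ofReal (cosh (l * ‖v - X ω‖)) ∂P := by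
  have h := (convexOn_cosh_mul_norm hl).ofReal_map_integral_le_lintegral (by fun_prop)
    (fun _ => (cosh_pos _).le) ((integrable_const v).sub hX)
  simpa [integral_sub (integrable_const v) hX, hX0] using h

lemma measure_ge_le_ofReal_two_mul_exp_mul_lintegral_cosh {Ω : Type*} [MeasurableSpace Ω]
    {P : Measure Ω} {Z : Ω → ℝ} (hZ : AEMeasurable Z P) {l : ℝ} (hl : 0 ≤ l) (s : ℝ) :
    P {ω | s ≤ Z ω} ≤
      ENNReal.ofReal (2 * exp (-(l * s))) * ∫⁻ ω, ENNReal.ofReal (cosh (l * Z ω)) ∂P := by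
  set ε := ENNReal.ofReal (exp (l * s) / 2)
  have hsub : {ω | s ≤ Z ω} ⊆ {ω | ε ≤ ENNReal.ofReal (cosh (l * Z ω))} := fun ω hω => by
    refine ENNReal.ofReal_le_ofReal ?_
    have : exp (l * s) ≤ exp (l * Z ω) := exp_le_exp.2 (mul_le_mul_of_nonneg_left hω hl)
    rw [cosh_eq]
    linarith [exp_pos (-(l * Z ω))]
  have hinv : ENNReal.ofReal (2 * exp (-(l * s))) * ε = 1 := by
    rw [← ENNReal.ofReal_mul (by positivity), exp_neg, ← ENNReal.ofReal_one]
    congr 1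
    field_simp
  calc P {ω | s ≤ Z ω} = ENNReal.ofReal (2 * exp (-(l * s))) * (ε * P {ω | s ≤ Z ω}) := by
        rw [← mul_assoc, hinv, one_mul]
    _ ≤ ENNReal.ofReal (2 * exp (-(l * s))) *
          (ε * P {ω | ε ≤ ENNReal.ofReal (cosh (l * Z ω))}) := by
        gcongr
    _ ≤ _ := by
        gcongr
        exact mul_meas_ge_le_lintegral₀ (by fun_prop) ε

lemma expMoment1_le_two_of_psi1Norm_lt {Ω : Type*} [MeasurableSpace Ω] {P : Measure Ω}
    {Z : Ω → ℝ} (hne : (psi1Set P Z).Nonempty) {s : ℝ} (hs : psi1Norm P Z < s) :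
    expMoment1 P Z s ≤ 2 := by
  obtain ⟨a, ha, has⟩ := (csInf_lt_iff ⟨0, fun a ha => ha.1.le⟩ hne).1 hs
  refine le_trans (lintegral_mono fun ω => ?_) ha.2
  gcongr
  exact ha.1

section Symmetrization

variable {E : Type*} [NormedAddCommGroup E] [MeasurableSpace E] [BorelSpace E]
  [SecondCountableTopology E]

noncomputable def symmetrization (μ : Measure E) : Measure E :=
  (μ.prod μ).map fun z => z.1 - z.2

instance (μ : Measure E) [IsFiniteMeasure μ] : IsFiniteMeasure (symmetrization μ) := by
  rw [symmetrization]; infer_instance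

lemma map_neg_symmetrization (μ : Measure E) [SFinite μ] :
    (symmetrization μ).map Neg.neg = symmetrization μ := by
  rw [symmetrization, Measure.map_map measurable_neg (by fun_prop)]
  conv_rhs => rw [← Measure.prod_swap, Measure.map_map (by fun_prop) measurable_swap]
  congr 1
  ext z
  simp

lemma map_sub_prod_pi_eq_pi_symmetrization (μ : Measure E) [IsFiniteMeasure μ] (n : ℕ) :
    ((Measure.pi fun _ : Fin n => μ).prod (Measure.pi fun _ => μ)).map (fun z => z.1 - z.2) =
      Measure.pi fun _ => symmetrization μ := by
  rw [← (measurePreserving_arrowProdEquivProdArrow E E (Fin n) (fun _ => μ) (fun _ => μ)).map_eq,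
    Measure.map_map (by fun_prop) (MeasurableEquiv.measurable _), symmetrization,
    ← Measure.pi_map_pi fun _ => (by fun_prop : Measurable fun z : E × E => z.1 - z.2).aemeasurable]
  rfl

lemma lintegral_cosh_sq_symmetrization_le {μ : Measure E} [IsProbabilityMeasure μ] {K l : ℝ}
    (hK : 0 < K) (hl : 0 ≤ l) (hlK : 8 * l * K ≤ 1)
    (hμ : ∫⁻ x, ENNReal.ofReal (exp (‖x‖ / (2 * K))) ∂μ ≤ 2) :
    ∫⁻ d, ENNReal.ofReal (cosh (l * ‖d‖) ^ 2) ∂(symmetrization μ) ≤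
      ENNReal.ofReal (exp (128 * (l * K) ^ 2)) := by
  have hexp : Measurable fun x : E => ENNReal.ofReal (exp (‖x‖ / (2 * K))) := by fun_prop
  have hpoint : ∀ z : E × E, ENNReal.ofReal (cosh (l * ‖z.1 - z.2‖) ^ 2) ≤
      1 + ENNReal.ofReal (32 * (l * K) ^ 2) *
        (ENNReal.ofReal (exp (‖z.1‖ / (2 * K))) * ENNReal.ofReal (exp (‖z.2‖ / (2 * K)))) := by
    intro z
    have hmono : cosh (l * ‖z.1 - z.2‖) ^ 2 ≤ cosh (l * (‖z.1‖ + ‖z.2‖)) ^ 2 := by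
      refine pow_le_pow_left₀ (cosh_pos _).le (cosh_le_cosh.2 ?_) 2
      rw [abs_of_nonneg (by positivity), abs_of_nonneg (by positivity)]
      exact mul_le_mul_of_nonneg_left (norm_sub_le _ _) hl
    rw [← ENNReal.ofReal_mul (exp_pos _).le, ← exp_add, ← add_div,
      ← ENNReal.ofReal_mul (by positivity), ← ENNReal.ofReal_one,
      ← ENNReal.ofReal_add zero_le_one (by positivity)]
    exact ENNReal.ofReal_le_ofReal
      (hmono.trans (cosh_mul_sq_le_one_add_mul_exp hK hl hlK (by positivity)))
  calc ∫⁻ d, ENNReal.ofReal (cosh (l * ‖d‖) ^ 2) ∂(symmetrization μ)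
      = ∫⁻ z, ENNReal.ofReal (cosh (l * ‖z.1 - z.2‖) ^ 2) ∂(μ.prod μ) :=
        lintegral_map (by fun_prop) (by fun_prop)
    _ ≤ ∫⁻ z, (1 + ENNReal.ofReal (32 * (l * K) ^ 2) *
          (ENNReal.ofReal (exp (‖z.1‖ / (2 * K))) * ENNReal.ofReal (exp (‖z.2‖ / (2 * K)))))
          ∂(μ.prod μ) := lintegral_mono hpoint
    _ = 1 + ENNReal.ofReal (32 * (l * K) ^ 2) *
          ((∫⁻ x, ENNReal.ofReal (exp (‖x‖ / (2 * K))) ∂μ) *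
            ∫⁻ x, ENNReal.ofReal (exp (‖x‖ / (2 * K))) ∂μ) := by
        rw [lintegral_add_left measurable_const, lintegral_const, measure_univ, mul_one,
          lintegral_const_mul _ (by fun_prop),
          lintegral_prod_mul hexp.aemeasurable hexp.aemeasurable]
    _ ≤ 1 + ENNReal.ofReal (32 * (l * K) ^ 2) * (2 * 2) := by gcongr
    _ ≤ ENNReal.ofReal (exp (128 * (l * K) ^ 2)) := by
        rw [show (2 : ℝ≥0∞) * 2 = ENNReal.ofReal 4 by norm_num,
          ← ENNReal.ofReal_mul (by positivity), ← ENNReal.ofReal_one, ← ENNReal.ofReal_add zero_le_one (by positivity)]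
        exact ENNReal.ofReal_le_ofReal (by linarith [add_one_le_exp (128 * (l * K) ^ 2)])

end Symmetrization

section CoshMoment

variable {E : Type*} [NormedAddCommGroup E] [InnerProductSpace ℝ E] [MeasurableSpace E]
  [BorelSpace E]

lemma lintegral_cosh_norm_add_le_of_map_neg_eq {ν : Measure E} (hν : ν.map Neg.neg = ν)
    {l : ℝ} (hl : 0 ≤ l) (w : E) :
    ∫⁻ d, ENNReal.ofReal (cosh (l * ‖w + d‖)) ∂ν ≤
      ENNReal.ofReal (cosh (l * ‖w‖)) * ∫⁻ d, ENNReal.ofReal (cosh (l * ‖d‖) ^ 2) ∂ν := by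
  have hsymm : ∫⁻ d, ENNReal.ofReal (cosh (l * ‖w - d‖)) ∂ν =
      ∫⁻ d, ENNReal.ofReal (cosh (l * ‖w + d‖)) ∂ν := by
    conv_rhs => rw [← hν]
    rw [lintegral_map (by fun_prop) measurable_neg]
    simp [sub_eq_add_neg]
  have hpoint : ∀ d, ENNReal.ofReal (cosh (l * ‖w + d‖)) + ENNReal.ofReal (cosh (l * ‖w - d‖)) ≤
      2 * (ENNReal.ofReal (cosh (l * ‖w‖)) * ENNReal.ofReal (cosh (l * ‖d‖) ^ 2)) := by
    intro d
    have h := cosh_norm_add_add_cosh_norm_sub_le (l • w) (l • d)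
    rw [← smul_add, ← smul_sub, norm_smul, norm_smul, norm_smul, norm_smul, norm_of_nonneg hl] at h
    rw [← ENNReal.ofReal_add (cosh_pos _).le (cosh_pos _).le, ← ENNReal.ofReal_mul (cosh_pos _).le,
      ← ENNReal.ofReal_ofNat 2, ← ENNReal.ofReal_mul zero_le_two]
    exact ENNReal.ofReal_le_ofReal (by linarith)
  refine (ENNReal.mul_le_mul_iff_right two_ne_zero ENNReal.ofNat_ne_top).1 ?_
  calc 2 * ∫⁻ d, ENNReal.ofReal (cosh (l * ‖w + d‖)) ∂ν
      = ∫⁻ d, (ENNReal.ofReal (cosh (l * ‖w + d‖)) + ENNReal.ofReal (cosh (l * ‖w - d‖))) ∂ν := by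
        rw [lintegral_add_left (by fun_prop), hsymm, two_mul]
    _ ≤ ∫⁻ d, 2 * (ENNReal.ofReal (cosh (l * ‖w‖)) * ENNReal.ofReal (cosh (l * ‖d‖) ^ 2)) ∂ν :=
        lintegral_mono hpoint
    _ = 2 * (ENNReal.ofReal (cosh (l * ‖w‖)) * ∫⁻ d, ENNReal.ofReal (cosh (l * ‖d‖) ^ 2) ∂ν) := by
        rw [lintegral_const_mul _ (by fun_prop), lintegral_const_mul _ (by fun_prop)]

variable [SecondCountableTopology E]

lemma lintegral_cosh_norm_add_sum_le_of_map_neg_eq {ν : Measure E} [SigmaFinite ν]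
    (hν : ν.map Neg.neg = ν) {l : ℝ} (hl : 0 ≤ l) (n : ℕ) (w : E) :
    ∫⁻ d : Fin n → E, ENNReal.ofReal (cosh (l * ‖w + ∑ i, d i‖)) ∂(Measure.pi fun _ => ν) ≤
      ENNReal.ofReal (cosh (l * ‖w‖)) * (∫⁻ d, ENNReal.ofReal (cosh (l * ‖d‖) ^ 2) ∂ν) ^ n := by
  induction n generalizing w with
  | zero => simp
  | succ n ih =>
    rw [← (measurePreserving_piFinSuccAbove (fun _ => ν) 0).symm.lintegral_comp (by fun_prop),
      lintegral_prod _ (by fun_prop)]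
    simp only [MeasurableEquiv.piFinSuccAbove_symm_apply, Fin.insertNthEquiv, Equiv.coe_fn_mk,
      Fin.sum_univ_succ, Fin.insertNth_zero', Fin.cons_zero, Fin.cons_succ, ← add_assoc]
    calc ∫⁻ d₀, ∫⁻ d, ENNReal.ofReal (cosh (l * ‖w + d₀ + ∑ i, d i‖)) ∂(Measure.pi fun _ => ν) ∂ν
        ≤ ∫⁻ d₀, ENNReal.ofReal (cosh (l * ‖w + d₀‖)) *
            (∫⁻ d, ENNReal.ofReal (cosh (l * ‖d‖) ^ 2) ∂ν) ^ n ∂ν :=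
          lintegral_mono fun d₀ => ih (w + d₀)
      _ = (∫⁻ d₀, ENNReal.ofReal (cosh (l * ‖w + d₀‖)) ∂ν) *
            (∫⁻ d, ENNReal.ofReal (cosh (l * ‖d‖) ^ 2) ∂ν) ^ n :=
          lintegral_mul_const _ (by fun_prop)
      _ ≤ ENNReal.ofReal (cosh (l * ‖w‖)) * (∫⁻ d, ENNReal.ofReal (cosh (l * ‖d‖) ^ 2) ∂ν) *
            (∫⁻ d, ENNReal.ofReal (cosh (l * ‖d‖) ^ 2) ∂ν) ^ n := by
          gcongr
          exact lintegral_cosh_norm_add_le_of_map_neg_eq hν hl w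
      _ = _ := by rw [pow_succ', mul_assoc]

lemma lintegral_cosh_norm_sum_le_lintegral_pi_symmetrization [CompleteSpace E] {Ω : Type*}
    [MeasurableSpace Ω] {P : Measure Ω} [IsProbabilityMeasure P] {μ : Measure E}
    [IsFiniteMeasure μ] {n : ℕ} {Y : Fin n → Ω → E} (hind : iIndepFun Y P)
    (hlaw : ∀ i, P.map (Y i) = μ) (hint : ∀ i, Integrable (Y i) P)
    (hmean : ∀ i, ∫ ω, Y i ω ∂P = 0) {l : ℝ} (hl : 0 ≤ l) :
    ∫⁻ ω, ENNReal.ofReal (cosh (l * ‖∑ i, Y i ω‖)) ∂P ≤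
      ∫⁻ d : Fin n → E, ENNReal.ofReal (cosh (l * ‖∑ i, d i‖))
        ∂(Measure.pi fun _ => symmetrization μ) := by
  have hpi : P.map (fun ω i => Y i ω) = Measure.pi fun _ => μ := by
    rw [hind.map_fun_eq_pi_map fun i => (hint i).aemeasurable]
    simp_rw [hlaw]
  have htransfer : ∀ g : (Fin n → E) → ℝ≥0∞, Measurable g →
      ∫⁻ ω, g (fun i => Y i ω) ∂P = ∫⁻ x, g x ∂(Measure.pi fun _ => μ) := fun g hg => by
    rw [← hpi, lintegral_map' hg.aemeasurable
      (aemeasurable_pi_lambda _ fun i => (hint i).aemeasurable)]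
  have hS := integrable_finsetSum Finset.univ fun i _ => hint i
  have hS0 : ∫ ω, ∑ i, Y i ω ∂P = 0 := by simp [integral_finsetSum _ fun i _ => hint i, hmean]
  calc ∫⁻ ω, ENNReal.ofReal (cosh (l * ‖∑ i, Y i ω‖)) ∂P
      ≤ ∫⁻ ω, ∫⁻ ω', ENNReal.ofReal (cosh (l * ‖∑ i, Y i ω - ∑ i, Y i ω'‖)) ∂P ∂P :=
        lintegral_mono fun ω => ofReal_cosh_norm_le_lintegral_cosh_norm_sub hS hS0 hl _
    _ = ∫⁻ x : Fin n → E, ∫⁻ y : Fin n → E, ENNReal.ofReal (cosh (l * ‖∑ i, x i - ∑ i, y i‖))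
          ∂(Measure.pi fun _ => μ) ∂(Measure.pi fun _ => μ) := by
        rw [← htransfer (fun x => ∫⁻ y : Fin n → E,
          ENNReal.ofReal (cosh (l * ‖∑ i, x i - ∑ i, y i‖)) ∂(Measure.pi fun _ => μ))
          (Measurable.lintegral_prod_right' (f := fun z : (Fin n → E) × (Fin n → E) =>
            ENNReal.ofReal (cosh (l * ‖∑ i, z.1 i - ∑ i, z.2 i‖))) (by fun_prop))]
        refine lintegral_congr fun ω => ?_
        exact htransfer (fun y => ENNReal.ofReal (cosh (l * ‖∑ i, Y i ω - ∑ i, y i‖)))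
          (by fun_prop)
    _ = ∫⁻ z : (Fin n → E) × (Fin n → E), ENNReal.ofReal (cosh (l * ‖∑ i, z.1 i - ∑ i, z.2 i‖))
          ∂((Measure.pi fun _ => μ).prod (Measure.pi fun _ => μ)) := by
        rw [lintegral_prod _ (by fun_prop)]
    _ = _ := by
        rw [← map_sub_prod_pi_eq_pi_symmetrization, lintegral_map (by fun_prop) (by fun_prop)]
        simp [Finset.sum_sub_distrib]

lemma measure_le_norm_sum_le [CompleteSpace E] {Ω : Type*} [MeasurableSpace Ω]
    {P : Measure Ω} [IsProbabilityMeasure P] {μ : Measure E} [IsProbabilityMeasure μ] {n : ℕ}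
    {Y : Fin n → Ω → E} (hind : iIndepFun Y P) (hlaw : ∀ i, P.map (Y i) = μ)
    (hint : ∀ i, Integrable (Y i) P) (hmean : ∀ i, ∫ ω, Y i ω ∂P = 0) {K l : ℝ} (hK : 0 < K)
    (hl : 0 ≤ l) (hlK : 8 * l * K ≤ 1) (hμ : ∫⁻ x, ENNReal.ofReal (exp (‖x‖ / (2 * K))) ∂μ ≤ 2)
    (s : ℝ) :
    P {ω | s ≤ ‖∑ i, Y i ω‖} ≤ ENNReal.ofReal (2 * exp (-(l * s) + n * (128 * (l * K) ^ 2))) := by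
  have hsum : ∫⁻ ω, ENNReal.ofReal (cosh (l * ‖∑ i, Y i ω‖)) ∂P ≤
      ENNReal.ofReal (exp (128 * (l * K) ^ 2)) ^ n := by
    refine (lintegral_cosh_norm_sum_le_lintegral_pi_symmetrization hind hlaw hint hmean hl).trans ?_
    have h := lintegral_cosh_norm_add_sum_le_of_map_neg_eq (map_neg_symmetrization μ) hl n 0
    simp only [zero_add, norm_zero, mul_zero, cosh_zero, ENNReal.ofReal_one, one_mul] at h
    exact h.trans (pow_le_pow_left' (lintegral_cosh_sq_symmetrization_le hK hl hlK hμ) n)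
  calc P {ω | s ≤ ‖∑ i, Y i ω‖}
      ≤ ENNReal.ofReal (2 * exp (-(l * s))) * ENNReal.ofReal (exp (128 * (l * K) ^ 2)) ^ n :=
        (measure_ge_le_ofReal_two_mul_exp_mul_lintegral_cosh (by fun_prop) hl s).trans
          (by gcongr)
    _ = _ := by
        rw [← ENNReal.ofReal_pow (exp_pos _).le, ← ENNReal.ofReal_mul (by positivity),
          ← exp_nat_mul, mul_assoc, ← exp_add]

end CoshMoment

/-- **Bernstein-type concentration for Hilbert-space-valued sums.**
There is a universal constant `c > 0` such that for every separable real Hilbert space `E`,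
every i.i.d. sequence `Y₁, …, Yₙ` of `E`-valued random elements with Bochner mean zero and
`K := ‖‖Y₁‖‖_{ψ₁} < ∞`, and every `0 ≤ t ≤ K`,
`P(‖(1/n) ∑ₖ Yₖ‖ ≥ t) ≤ 2 exp(−c n t² / K²)`. -/
theorem stmt_15 :
    ∃ c : ℝ, 0 < c ∧
      ∀ (E : Type) [NormedAddCommGroup E] [InnerProductSpace ℝ E] [CompleteSpace E]
        [TopologicalSpace.SeparableSpace E] [MeasurableSpace E] [BorelSpace E]
        (Ω : Type) [MeasurableSpace Ω] (P : Measure Ω) [IsProbabilityMeasure P]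
        (n : ℕ) (hn : 0 < n) (Y : Fin n → Ω → E),
        iIndepFun Y P →
        (∀ k l, IdentDistrib (Y k) (Y l) P P) →
        (∀ k, Integrable (Y k) P) →
        (∀ k, ∫ ω, Y k ω ∂P = 0) →
        (psi1Set P fun ω => ‖Y ⟨0, hn⟩ ω‖).Nonempty →
        ∀ t : ℝ, 0 ≤ t → t ≤ psi1Norm P (fun ω => ‖Y ⟨0, hn⟩ ω‖) →
          P {ω | t ≤ ‖(n : ℝ)⁻¹ • ∑ k, Y k ω‖} ≤
            ENNReal.ofReal (2 * Real.exp
              (-(c * n * t ^ 2 / (psi1Norm P fun ω => ‖Y ⟨0, hn⟩ ω‖) ^ 2))) := by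
  refine ⟨1 / 512, by norm_num, ?_⟩
  intro E _ _ _ _ _ _ Ω _ P _ n hn Y hind hident hint hmean hne t ht0 htK
  have : SecondCountableTopology E := UniformSpace.secondCountable_of_separable E
  have : IsProbabilityMeasure (P.map (Y ⟨0, hn⟩)) :=
    Measure.isProbabilityMeasure_map (hint _).aemeasurable
  set K := psi1Norm P fun ω => ‖Y ⟨0, hn⟩ ω‖
  rcases ht0.eq_or_lt with rfl | ht
  · exact prob_le_one.trans (by simp)
  have hK : 0 < K := ht.trans_le htK
  have hμ : ∫⁻ x, ENNReal.ofReal (exp (‖x‖ / (2 * K))) ∂(P.map (Y ⟨0, hn⟩)) ≤ 2 := by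
    rw [lintegral_map' (by fun_prop) (hint _).aemeasurable]
    simpa [expMoment1] using expMoment1_le_two_of_psi1Norm_lt hne (by linarith : K < 2 * K)
  -- `l = t / (256 K²)` minimises the exponent `-l n t + 128 n (l K)²`.
  have hlK : 8 * (t / (256 * K ^ 2)) * K ≤ 1 := by
    rw [show 8 * (t / (256 * K ^ 2)) * K = t / (32 * K) by field_simp; ring,
      div_le_one (by positivity)]
    linarith
  calc P {ω | t ≤ ‖(n : ℝ)⁻¹ • ∑ k, Y k ω‖} = P {ω | n * t ≤ ‖∑ k, Y k ω‖} := by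
        congr 1
        ext ω
        simp [norm_smul, le_inv_mul_iff₀ (by positivity : (0 : ℝ) < n)]
    _ ≤ _ := measure_le_norm_sum_le hind (fun i => (hident i ⟨0, hn⟩).map_eq) hint hmean hK
        (by positivity) hlK hμ _
    _ = _ := by
        congr 3
        field_simp
        ring
end
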